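/- arXiv:2406.15884 — 2 statements merged into one kernel-verified Lean document; each statement's English description precedes it below -/
import Mathlib

section
/- Let X be a type and let (V, ⊗, 𝟙_V) be a monoidal category with coproducts indexed by types in the universe of X, such that the tensor product preserves these coproducts in each variable. For V-graphs A, B, C : X → X → V define the composition product by (A ∘ B)(x, z) = ∐_{y : X} A(x, y) ⊗ B(y, z). Then for all A, B, C and all x, z : X there is an isomorphism ((A ∘ B) ∘ C)(x, z) ≅ (A ∘ (B ∘ C))(x, z), i.e. ∐_{y : X} ( (∐_{w : X} A(x, w) ⊗ B(w, y)) ⊗ C(y, z) ) ≅ ∐_{w : X} ( A(x, w) ⊗ (∐_{y : X} B(w, y) ⊗ C(y, z)) ). (This is the associativity underlying the monoidal structure on Quiv_X(V).) -/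
open CategoryTheory Limits MonoidalCategory

universe w u u'

section Aux

variable {X : Type u} {V : Type u'} [Category.{w} V] [MonoidalCategory V] [HasCoproducts.{u} V]

/-- Tensoring on the right distributes over coproducts (given preservation). -/
noncomputable def rightDistrib (f : X → V) (c : V)
    [PreservesColimitsOfShape (Discrete X) (tensorRight c)] :
    ((∐ f : V) ⊗ c) ≅ ∐ (fun w => f w ⊗ c) :=
  preservesColimitIso (tensorRight c) (Discrete.functor f) ≪≫
    HasColimit.isoOfNatIso (Discrete.natIso fun ⟨_⟩ => Iso.refl _)

/-- Tensoring on the left distributes over coproducts (given preservation). -/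
noncomputable def leftDistrib (f : X → V) (c : V)
    [PreservesColimitsOfShape (Discrete X) (tensorLeft c)] :
    (c ⊗ (∐ f : V)) ≅ ∐ (fun w => c ⊗ f w) :=
  preservesColimitIso (tensorLeft c) (Discrete.functor f) ≪≫
    HasColimit.isoOfNatIso (Discrete.natIso fun ⟨_⟩ => Iso.refl _)

/-- Commuting a double coproduct. -/
noncomputable def sigmaSwap (h : X → X → V) :
    (∐ fun y => (∐ fun w => h y w : V)) ≅ (∐ fun w => (∐ fun y => h y w : V)) where
  hom := Sigma.desc fun y => Sigma.desc fun w =>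
    Sigma.ι (fun y => h y w) y ≫ Sigma.ι (fun w => (∐ fun y => h y w : V)) w
  inv := Sigma.desc fun w => Sigma.desc fun y =>
    Sigma.ι (fun w => h y w) w ≫ Sigma.ι (fun y => (∐ fun w => h y w : V)) y
  hom_inv_id := by ext; simp
  inv_hom_id := by ext; simp

end Aux

/--
Associativity of the composition product of `V`-graphs:
for `V`-graphs `A B C : X → X → V`, with `(A ∘ B)(x, z) = ∐_{y : X} A(x, y) ⊗ B(y, z)`,
there is an isomorphism `((A ∘ B) ∘ C)(x, z) ≅ (A ∘ (B ∘ C))(x, z)`.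
-/
theorem quiver_comp_assoc
    (X : Type u) (V : Type u') [Category.{w} V] [MonoidalCategory V] [HasCoproducts.{u} V]
    (hleft : ∀ (v : V) (J : Type u), PreservesColimitsOfShape (Discrete J) (tensorLeft v))
    (hright : ∀ (v : V) (J : Type u), PreservesColimitsOfShape (Discrete J) (tensorRight v))
    (A B C : X → X → V) (x z : X) :
    Nonempty ((∐ (fun (y : X) =>
        (((∐ (fun (w : X) => A x w ⊗ B w y)) : V) ⊗ (C y z) : V))) ≅
      (∐ (fun (w : X) =>
        ((A x w) ⊗ ((∐ (fun (y : X) => B w y ⊗ C y z)) : V) : V)))) := by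
  have h1 : ∀ v : V, PreservesColimitsOfShape (Discrete X) (tensorLeft v) := fun v => hleft v X
  have h2 : ∀ v : V, PreservesColimitsOfShape (Discrete X) (tensorRight v) := fun v => hright v X
  exact ⟨
    (Sigma.mapIso fun y => @rightDistrib X V _ _ _ (fun w => A x w ⊗ B w y) (C y z) (h2 _)) ≪≫
    (Sigma.mapIso fun y => Sigma.mapIso fun w => α_ (A x w) (B w y) (C y z)) ≪≫
    sigmaSwap (fun y w => A x w ⊗ (B w y ⊗ C y z)) ≪≫
    (Sigma.mapIso fun w => (@leftDistrib X V _ _ _ (fun y => B w y ⊗ C y z) (A x w) (h1 _)).symm)⟩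
end

section
/- Let X be a type and let (V, ⊗, 𝟙_V) be a monoidal category with coproducts indexed by types in the universe of X, such that the tensor product preserves these coproducts in each variable. Define the unit V-graph by U(x, y) = ∐_{h : x = y} 𝟙_V. Then for every V-graph A : X → X → V and all x, z : X there is an isomorphism ∐_{y : X} ( A(x, y) ⊗ U(y, z) ) ≅ A(x, z). (This is the right unit law for the composition product on Quiv_X(V).) -/
open CategoryTheory Limits MonoidalCategory

universe w u u'

/--
Right unit law for the composition product on `Quiv_X(V)`: with the unit `V`-graph
`U(x, y) = ∐_{h : x = y} 𝟙_V`, for every `V`-graph `A : X → X → V` and all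
`x z : X` there is an isomorphism `∐_{y : X} (A(x, y) ⊗ U(y, z)) ≅ A(x, z)`.
-/
theorem quiver_comp_right_unit
    (X : Type u) (V : Type u') [Category.{w} V] [MonoidalCategory V] [HasCoproducts.{u} V]
    (hleft : ∀ (v : V) (J : Type u), PreservesColimitsOfShape (Discrete J) (tensorLeft v))
    (hright : ∀ (v : V) (J : Type u), PreservesColimitsOfShape (Discrete J) (tensorRight v))
    (A : X → X → V) (x z : X) :
    Nonempty ((∐ (fun (y : X) =>
        ((A x y) ⊗ ((∐ (fun (_ : ULift.{u} (PLift (y = z))) => (𝟙_ V))) : V) : V))) ≅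
      A x z) := by
  have := hleft
  refine ⟨?_⟩
  have e1 : ∀ y : X,
      (A x y ⊗ (∐ (fun (_ : ULift.{u} (PLift (y = z))) => (𝟙_ V)) : V) : V) ≅
      ∐ (fun (_ : ULift.{u} (PLift (y = z))) => (A x y ⊗ 𝟙_ V : V)) := fun y =>
    preservesColimitIso (tensorLeft (A x y))
        (Discrete.functor (fun (_ : ULift.{u} (PLift (y = z))) => (𝟙_ V))) ≪≫
      HasColimit.isoOfNatIso (Discrete.natIso fun _ => Iso.refl _)
  refine (Sigma.mapIso e1).trans ?_
  refine (sigmaSigmaIso (fun y : X => ULift.{u} (PLift (y = z)))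
      (fun y _ => (A x y ⊗ 𝟙_ V : V))).trans ?_
  haveI : Unique ((y : X) × ULift.{u} (PLift (y = z))) :=
    ⟨⟨⟨z, ⟨⟨rfl⟩⟩⟩⟩, by rintro ⟨y, ⟨⟨h⟩⟩⟩; subst h; rfl⟩
  refine (Sigma.whiskerEquiv (K := PUnit.{u+1})
      (f := fun p : Σ y : X, ULift.{u} (PLift (y = z)) => (A x p.1 ⊗ 𝟙_ V : V))
      (g := fun _ => A x z)
      (Equiv.equivPUnit _)
      (fun j => eqToIso (by rw [j.2.down.down]) ≪≫ (ρ_ (A x j.1)).symm)).trans ?_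
  exact coproductUniqueIso _
end
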